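/- arXiv:1812.05966 — 3 statements merged into one kernel-verified Lean document; each statement's English description precedes it below -/
import Mathlib

section
/- Let G(i) = 2i·∑_{j=2}^{i} 1/j and let S(i) = i·(4·∑_{m=2}^{i-1} (G(m)/m)/(m+1) + G(i)/i). Then the series ∑_{i=1}^{∞} S(i)/(i(i+1)(i+2)) converges to 5. -/
noncomputable def Gfun (i : ℕ) : ℝ := 2 * i * ∑ j ∈ Finset.Icc 2 i, (1 : ℝ) / j

noncomputable def Sfun (i : ℕ) : ℝ :=
  (i : ℝ) * (4 * ∑ m ∈ Finset.Icc 2 (i - 1), (Gfun m / m) / (m + 1) + Gfun i / i)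

/-!
Put `c n = S(n+1)/(n+1)` and `u n = 1/(n+2)`, so that the series is `∑ c n * (u n - u (n+1))`.
Summation by parts turns it into `c 0 * u 0 + ∑ (c (n+1) - c n) * u (n+1)`; for a nonnegative
monotone `c` the boundary term `c N * u N` is bounded by a tail of the (bounded, nonnegative)
series, so no growth estimate on `G` or `S` is needed. Here `c (n+1) - c n = d n / (n+2)` with
`d n = 4 G(n+1)/(n+1) + 2`, and since `d (n+1) - d n = 8/(n+2)` a second summation by parts gives
`d 0 / 2 + ∑ 8/((n+2)(n+3)) = 1 + 4 = 5`.
-/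

open Filter Topology Finset

theorem sum_range_mul_sub_succ (c u : ℕ → ℝ) (N : ℕ) :
    ∑ n ∈ range N, c n * (u n - u (n + 1)) =
      c 0 * u 0 - c N * u N + ∑ n ∈ range N, (c (n + 1) - c n) * u (n + 1) := by
  induction N with
  | zero => simp
  | succ N ih => rw [sum_range_succ, sum_range_succ, ih]; ring

section SummationByParts

variable {c u : ℕ → ℝ}

theorem mul_le_tsum_sub_sum_range (hc0 : ∀ n, 0 ≤ c n) (hc : Monotone c) (hu : Antitone u)
    (hu0 : Tendsto u atTop (𝓝 0)) (hsum : Summable fun n ↦ c n * (u n - u (n + 1))) (N : ℕ) :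
    c N * u N ≤ ∑' n, c n * (u n - u (n + 1)) - ∑ n ∈ range N, c n * (u n - u (n + 1)) := by
  have hterm : ∀ n, 0 ≤ c n * (u n - u (n + 1)) :=
    fun n ↦ mul_nonneg (hc0 n) (sub_nonneg.2 (hu n.le_succ))
  have hbound : ∀ M, c N * (u N - u (N + M)) ≤
      ∑' n, c n * (u n - u (n + 1)) - ∑ n ∈ range N, c n * (u n - u (n + 1)) := by
    intro M
    have htail : c N * (u N - u (N + M)) ≤ ∑ k ∈ range M, c (N + k) * (u (N + k) - u (N + k + 1)) := by
      have htelescope := sum_range_sub' (fun k ↦ u (N + k)) M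
      simp only [add_zero, ← add_assoc] at htelescope
      rw [← htelescope, mul_sum]
      exact sum_le_sum fun k _ ↦
        mul_le_mul_of_nonneg_right (hc (Nat.le_add_right N k)) (sub_nonneg.2 (hu (by omega)))
    have hpartial := hsum.sum_le_tsum (range (N + M)) (fun n _ ↦ hterm n)
    rw [sum_range_add] at hpartial
    linarith
  have hlim : Tendsto (fun M ↦ c N * (u N - u (N + M))) atTop (𝓝 (c N * (u N - 0))) :=
    ((hu0.comp (tendsto_add_atTop_nat N)).const_sub (u N)).const_mul (c N) |>.congr
      fun M ↦ by simp [add_comm]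
  simpa using le_of_tendsto' hlim hbound

theorem hasSum_mul_sub_succ (hc0 : ∀ n, 0 ≤ c n) (hc : Monotone c) (hu : Antitone u)
    (hu0 : Tendsto u atTop (𝓝 0)) {s : ℝ} (hs : HasSum (fun n ↦ (c (n + 1) - c n) * u (n + 1)) s) :
    HasSum (fun n ↦ c n * (u n - u (n + 1))) (c 0 * u 0 + s) := by
  have hu_nonneg : ∀ n, 0 ≤ u n := hu.le_of_tendsto hu0
  have hterm : ∀ n, 0 ≤ c n * (u n - u (n + 1)) :=
    fun n ↦ mul_nonneg (hc0 n) (sub_nonneg.2 (hu n.le_succ))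
  have hsum : Summable fun n ↦ c n * (u n - u (n + 1)) := by
    refine summable_of_sum_range_le hterm (c := c 0 * u 0 + s) fun N ↦ ?_
    have := sum_le_hasSum (range N) (fun n _ ↦ mul_nonneg (sub_nonneg.2 (hc n.le_succ))
      (hu_nonneg (n + 1))) hs
    rw [sum_range_mul_sub_succ]
    linarith [mul_nonneg (hc0 N) (hu_nonneg N)]
  have hboundary : Tendsto (fun N ↦ c N * u N) atTop (𝓝 0) := by
    refine squeeze_zero (fun N ↦ mul_nonneg (hc0 N) (hu_nonneg N))
      (mul_le_tsum_sub_sum_range hc0 hc hu hu0 hsum) ?_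
    simpa using hsum.hasSum.tendsto_sum_nat.const_sub (∑' n, c n * (u n - u (n + 1)))
  rw [hasSum_iff_tendsto_nat_of_nonneg hterm]
  simp_rw [sum_range_mul_sub_succ]
  simpa using (tendsto_const_nhds.sub hboundary).add hs.tendsto_sum_nat

theorem hasSum_div_add_two_mul_add_three (hc0 : ∀ n, 0 ≤ c n) (hc : Monotone c) {s : ℝ}
    (hs : HasSum (fun n : ℕ ↦ (c (n + 1) - c n) / ((n : ℝ) + 3)) s) :
    HasSum (fun n : ℕ ↦ c n / (((n : ℝ) + 2) * ((n : ℝ) + 3))) (c 0 / 2 + s) := by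
  have hu : Antitone fun n : ℕ ↦ 1 / ((n : ℝ) + 2) := fun _ _ h ↦ by
    simp only
    gcongr
  have hu0 : Tendsto (fun n : ℕ ↦ 1 / ((n : ℝ) + 2)) atTop (𝓝 0) :=
    tendsto_one_div_add_atTop_nhds_zero_nat.comp (tendsto_add_atTop_nat 1) |>.congr fun n ↦ by
      simp only [Function.comp_apply]; push_cast; ring
  convert hasSum_mul_sub_succ hc0 hc hu hu0 (s := s) (by convert hs using 2; push_cast; ring) using 1
  · funext n
    push_cast
    field_simp
    ring
  · simp only [Nat.cast_zero, zero_add]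
    ring

end SummationByParts

theorem Gfun_div_self (n : ℕ) : Gfun n / n = 2 * ∑ j ∈ Icc 2 n, (1 : ℝ) / j := by
  rcases n.eq_zero_or_pos with rfl | hn
  · simp
  · rw [Gfun]
    field_simp

theorem Gfun_one : Gfun 1 = 0 := by
  simp [Gfun]

theorem Gfun_div_self_nonneg (n : ℕ) : 0 ≤ Gfun n / n := by
  rw [Gfun_div_self]
  positivity

theorem Gfun_succ_succ_div (n : ℕ) :
    Gfun (n + 2) / ((n : ℝ) + 2) = Gfun (n + 1) / ((n : ℝ) + 1) + 2 / ((n : ℝ) + 2) := by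
  have h := Gfun_div_self (n + 2)
  rw [sum_Icc_succ_top (by omega), mul_add, ← Gfun_div_self (n + 1)] at h
  push_cast at h
  rw [h]
  ring

theorem Sfun_succ_div (n : ℕ) :
    Sfun (n + 1) / ((n : ℝ) + 1) =
      4 * ∑ m ∈ Icc 2 n, Gfun m / m / (m + 1) + Gfun (n + 1) / ((n : ℝ) + 1) := by
  rw [Sfun, Nat.add_sub_cancel]
  push_cast
  field_simp

theorem Sfun_succ_succ_div_sub (n : ℕ) :
    Sfun (n + 2) / ((n : ℝ) + 2) - Sfun (n + 1) / ((n : ℝ) + 1) =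
      (4 * (Gfun (n + 1) / ((n : ℝ) + 1)) + 2) / ((n : ℝ) + 2) := by
  have h := Sfun_succ_div (n + 1)
  push_cast at h
  rw [show (n : ℝ) + 1 + 1 = n + 2 by ring, Gfun_succ_succ_div] at h
  rw [h, Sfun_succ_div]
  rcases n with _ | n
  · simp [Gfun]
  · rw [sum_Icc_succ_top (by omega)]
    push_cast
    field_simp
    ring

theorem Sfun_succ_div_nonneg (n : ℕ) : 0 ≤ Sfun (n + 1) / ((n : ℝ) + 1) := by
  rw [Sfun_succ_div]
  have hsum : 0 ≤ ∑ m ∈ Icc 2 n, Gfun m / m / (m + 1) :=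
    sum_nonneg fun m _ ↦ div_nonneg (Gfun_div_self_nonneg m) (by positivity)
  have := Gfun_div_self_nonneg (n + 1)
  push_cast at this
  positivity

theorem monotone_Gfun_succ_div : Monotone fun n : ℕ ↦ Gfun (n + 1) / ((n : ℝ) + 1) :=
  monotone_nat_of_le_succ fun n ↦ by
    have h := Gfun_succ_succ_div n
    norm_num [add_assoc] at h ⊢
    rw [h]
    exact le_add_of_nonneg_right (by positivity)

theorem monotone_Sfun_succ_div : Monotone fun n : ℕ ↦ Sfun (n + 1) / ((n : ℝ) + 1) :=
  monotone_nat_of_le_succ fun n ↦ by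
    have h := Sfun_succ_succ_div_sub n
    have := Gfun_div_self_nonneg (n + 1)
    norm_num [add_assoc] at h this ⊢
    rw [← sub_nonneg, h]
    positivity

theorem hasSum_eight_div_add_two_mul_add_three :
    HasSum (fun n : ℕ ↦ 8 / (((n : ℝ) + 2) * ((n : ℝ) + 3))) 4 := by
  have := hasSum_div_add_two_mul_add_three (c := fun _ ↦ 8) (fun _ ↦ by norm_num) monotone_const
    (s := 0) (by simp [hasSum_zero])
  norm_num at this
  exact this

theorem hasSum_Gfun_succ_div :
    HasSum (fun n : ℕ ↦
      (4 * (Gfun (n + 1) / ((n : ℝ) + 1)) + 2) / (((n : ℝ) + 2) * ((n : ℝ) + 3))) 5 := by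
  have := hasSum_div_add_two_mul_add_three
    (c := fun n : ℕ ↦ 4 * (Gfun (n + 1) / ((n : ℝ) + 1)) + 2)
    (fun n ↦ by have := Gfun_div_self_nonneg (n + 1); push_cast at this; positivity)
    ((monotone_Gfun_succ_div.const_mul (by norm_num)).add_const 2) (s := 4) (by
      convert hasSum_eight_div_add_two_mul_add_three using 2 with n
      have h := Gfun_succ_succ_div n
      norm_num [add_assoc] at h ⊢
      rw [h]
      field_simp
      ring)
  norm_num [Gfun_one] at this
  exact this

theorem stmt_10 :
    HasSum (fun n : ℕ =>
        Sfun (n + 1) / (((n : ℝ) + 1) * ((n : ℝ) + 2) * ((n : ℝ) + 3))) 5 := by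
  have h := hasSum_div_add_two_mul_add_three (c := fun n ↦ Sfun (n + 1) / ((n : ℝ) + 1))
    Sfun_succ_div_nonneg monotone_Sfun_succ_div (s := 5) (by
      convert hasSum_Gfun_succ_div using 2 with n
      have h := Sfun_succ_succ_div_sub n
      norm_num [add_assoc] at h ⊢
      rw [← div_div, ← h])
  convert h using 1
  · funext n
    field_simp
  · simp [Sfun, Gfun_one]
end

section
/- Define V(k) = (k+1)/k · ( ∑_{i=1}^{k-1} S(i)/(i(i+1)(i+2)) + 4·∑_{i=1}^{k-1} 1/((i+1)(i+2)) + 4·∑_{i=1}^{k-1} (G(i)/i)/(i+2) ) − (G(k)/k)², where G(i) = 2i·∑_{j=2}^{i} 1/j and S(i) = i·(4·∑_{m=2}^{i-1}(G(m)/m)/(m+1) + G(i)/i). Then V(k) converges as k → ∞ and lim_{k→∞} V(k) = 7 − 2π²/3. -/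
open Real Filter

noncomputable def Vfun (k : ℕ) : ℝ :=
  ((k : ℝ) + 1) / k *
    (∑ i ∈ Finset.Icc 1 (k - 1), Sfun i / (i * (i + 1) * (i + 2)) +
     4 * ∑ i ∈ Finset.Icc 1 (k - 1), (1 : ℝ) / ((i + 1) * (i + 2)) +
     4 * ∑ i ∈ Finset.Icc 1 (k - 1), (Gfun i / i) / (i + 2)) -
  (Gfun k / k) ^ 2

/-!
Writing `H n` for the harmonic numbers and `P n = ∑_{i ≤ n} 1/i²`, one has `G i / i = 2 (H i - 1)`,
and every sum in `V` is a rational expression in `H`, `P` and `n` (each identity is checked by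
induction, the increment being a rational-function identity). Everything collapses to
`V k = 7 - 4 P k - (1 + 2 H k) / k`; since `P k → π² / 6` and `H k / k → 0` (Cesàro), the limit is
`7 - 2π²/3`.
-/

open Finset

noncomputable def invSqSum (n : ℕ) : ℝ := ∑ i ∈ range n, 1 / ((i : ℝ) + 1) ^ 2

lemma invSqSum_zero : invSqSum 0 = 0 := by simp [invSqSum]

lemma invSqSum_succ (n : ℕ) : invSqSum (n + 1) = invSqSum n + 1 / ((n : ℝ) + 1) ^ 2 :=
  sum_range_succ _ _

lemma harmonic_succ_real (n : ℕ) :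
    (harmonic (n + 1) : ℝ) = harmonic n + 1 / ((n : ℝ) + 1) := by
  rw [harmonic_succ]; push_cast; ring

lemma Gfun_div_self_s11 {i : ℕ} (hi : 1 ≤ i) : Gfun i / i = 2 * ((harmonic i : ℝ) - 1) := by
  have hsum : ∑ j ∈ Icc 2 i, (1 : ℝ) / j = harmonic i - 1 := by
    rw [harmonic_eq_sum_Icc, ← add_sum_Ioc_eq_sum_Icc hi]
    push_cast
    simp [one_div, ← Icc_add_one_left_eq_Ioc]
  rw [Gfun, hsum]
  field_simp

lemma sum_Gfun_div_div_add_one (n : ℕ) :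
    ∑ m ∈ Icc 2 n, Gfun m / m / (m + 1) =
      2 - 2 * harmonic n + (harmonic n : ℝ) ^ 2 - invSqSum n
        - 2 / ((n : ℝ) + 1) + 2 * harmonic n / ((n : ℝ) + 1) := by
  induction n with
  | zero => simp [invSqSum_zero]
  | succ n ih =>
    rcases Nat.eq_zero_or_pos n with rfl | hn
    · norm_num [invSqSum]
    rw [sum_Icc_succ_top (by omega), ih, Gfun_div_self_s11 (by omega), harmonic_succ_real,
      invSqSum_succ]
    push_cast
    field_simp
    ring

lemma Sfun_eq {i : ℕ} (hi : 1 ≤ i) :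
    Sfun i = i * (6 - 6 * harmonic i + 4 * (harmonic i : ℝ) ^ 2 - 4 * invSqSum i) := by
  obtain ⟨n, rfl⟩ : ∃ n, i = n + 1 := ⟨i - 1, by omega⟩
  rw [Sfun, Nat.add_sub_cancel, sum_Gfun_div_div_add_one, Gfun_div_self_s11 (by omega),
    harmonic_succ_real, invSqSum_succ]
  push_cast
  field_simp
  ring

lemma sum_one_div_add_one_mul_add_two (n : ℕ) :
    ∑ i ∈ Icc 1 n, (1 : ℝ) / ((i + 1) * (i + 2)) = 1 / 2 - 1 / ((n : ℝ) + 2) := by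
  induction n with
  | zero => norm_num
  | succ n ih =>
    rw [sum_Icc_succ_top (by omega), ih]
    push_cast
    field_simp
    ring

lemma sum_Gfun_div_div_add_two (n : ℕ) :
    ∑ i ∈ Icc 1 n, Gfun i / i / (i + 2) =
      1 - 2 * harmonic n + (harmonic n : ℝ) ^ 2 - invSqSum n + 2 * harmonic n / ((n : ℝ) + 1)
        - 2 / ((n : ℝ) + 2) + 2 * harmonic n / ((n : ℝ) + 2) := by
  induction n with
  | zero => simp [invSqSum_zero]
  | succ n ih =>
    rw [sum_Icc_succ_top (by omega), ih, Gfun_div_self_s11 (by omega), harmonic_succ_real,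
      invSqSum_succ]
    push_cast
    field_simp
    ring

lemma sum_Sfun_div (n : ℕ) :
    ∑ i ∈ Icc 1 n, Sfun i / (i * (i + 1) * (i + 2)) =
      5 - 2 / ((n : ℝ) + 1) - 8 * harmonic n / ((n : ℝ) + 1) - 6 / ((n : ℝ) + 2)
        + 6 * harmonic n / ((n : ℝ) + 2) - 4 * (harmonic n : ℝ) ^ 2 / ((n : ℝ) + 2)
        + 4 * invSqSum n / ((n : ℝ) + 2) := by
  induction n with
  | zero => norm_num [invSqSum_zero]
  | succ n ih =>
    rw [sum_Icc_succ_top (by omega), ih, Sfun_eq (by omega), harmonic_succ_real, invSqSum_succ]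
    push_cast
    field_simp
    ring

lemma Vfun_eq {k : ℕ} (hk : 1 ≤ k) :
    Vfun k = 7 - 4 * invSqSum k - 1 / (k : ℝ) - 2 * (harmonic k / k) := by
  obtain ⟨n, rfl⟩ : ∃ n, k = n + 1 := ⟨k - 1, by omega⟩
  rw [Vfun, Nat.add_sub_cancel, sum_Sfun_div, sum_one_div_add_one_mul_add_two,
    sum_Gfun_div_div_add_two, Gfun_div_self_s11 (by omega), harmonic_succ_real, invSqSum_succ]
  push_cast
  field_simp
  ring

lemma tendsto_invSqSum : Tendsto invSqSum atTop (nhds (π ^ 2 / 6)) := by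
  convert ((hasSum_nat_add_iff' 1).mpr hasSum_zeta_two).tendsto_sum_nat using 2
  · simp [invSqSum]
  · simp

lemma tendsto_harmonic_div_self : Tendsto (fun n : ℕ ↦ (harmonic n : ℝ) / n) atTop (nhds 0) := by
  refine tendsto_one_div_add_atTop_nhds_zero_nat.cesaro.congr fun n ↦ ?_
  simp [harmonic, div_eq_inv_mul]

theorem stmt_11 : Tendsto Vfun atTop (nhds (7 - 2 * π ^ 2 / 3)) := by
  have hlim : Tendsto (fun k : ℕ ↦ 7 - 4 * invSqSum k - 1 / (k : ℝ) - 2 * (harmonic k / k))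
      atTop (nhds (7 - 4 * (π ^ 2 / 6) - 0 - 2 * 0)) :=
    ((tendsto_const_nhds.sub (tendsto_invSqSum.const_mul 4)).sub
      tendsto_one_div_atTop_nhds_zero_nat).sub (tendsto_harmonic_div_self.const_mul 2)
  rw [show (7 : ℝ) - 4 * (π ^ 2 / 6) - 0 - 2 * 0 = 7 - 2 * π ^ 2 / 3 by ring] at hlim
  exact hlim.congr' (eventually_atTop.mpr ⟨1, fun k hk ↦ (Vfun_eq hk).symm⟩)
end

section
/- For p ∈ (0,1), the identity ∑_{k=1}^{∞} (H_k)² (1−p) p^{k−1} = (1/p)·∑_{k=1}^{∞} p^{k}/k² + (log(1−p))²/p holds, where H_k = ∑_{i=1}^{k} 1/i. Equivalently, E[H_Z²] for a geometric random variable Z with P(Z=k)=(1−p)p^{k−1} equals (1/p)·∑_{k≥1} p^k/k² + (log(1−p))²/p. -/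
/-!
With $H_n$ the harmonic numbers, $H_{n+1}^2 - H_n^2 = 2H_n/(n+1) + 1/(n+1)^2$. The generating
series of the first part is $\log^2(1-x)$: squaring $-\log(1-x) = \sum x^{n+1}/(n+1)$ as a Cauchy
product and using $\frac{1}{(k+1)(l+1)} = \frac{1}{n+2}\bigl(\frac{1}{k+1} + \frac{1}{l+1}\bigr)$
for $k + l = n$ gives coefficients $2H_{n+1}/(n+2)$. The second part gives $\mathrm{Li}_2(x)$.
Multiplying by the geometric series $1/(1-x)$ telescopes the increments back to $H_{n+1}^2$.
-/

open Finset Finset.Nat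

theorem HasSum.mul_antidiagonal_of_summable_norm {R : Type*} [NormedRing R] [CompleteSpace R]
    {f g : ℕ → R} {a b : R} (hf : HasSum f a) (hg : HasSum g b)
    (hf' : Summable fun n => ‖f n‖) (hg' : Summable fun n => ‖g n‖) :
    HasSum (fun n => ∑ kl ∈ antidiagonal n, f kl.1 * g kl.2) (a * b) := by
  rw [← hf.tsum_eq, ← hg.tsum_eq, tsum_mul_tsum_eq_tsum_sum_antidiagonal_of_summable_norm hf' hg']
  exact (summable_norm_sum_mul_antidiagonal_of_summable_norm hf' hg').of_norm.hasSum

theorem HasSum.sum_range_mul_geometric {K : Type*} [NormedDivisionRing K] [CompleteSpace K]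
    {a : ℕ → K} {x s : K} (hx : ‖x‖ < 1) (ha : Summable fun n => ‖a n * x ^ n‖)
    (h : HasSum (fun n => a n * x ^ n) s) :
    HasSum (fun n => (∑ k ∈ range (n + 1), a k) * x ^ n) (s * (1 - x)⁻¹) := by
  have hgeom : Summable fun n => ‖x ^ n‖ := by
    simpa only [norm_pow] using summable_geometric_of_lt_one (norm_nonneg x) hx
  convert h.mul_antidiagonal_of_summable_norm (hasSum_geometric_of_norm_lt_one hx) ha hgeom
    using 2 with n
  rw [sum_antidiagonal_eq_sum_range_succ_mk, sum_mul]
  refine sum_congr rfl fun k hk => ?_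
  rw [mul_assoc, ← pow_add, Nat.add_sub_cancel' (Nat.lt_succ_iff.mp (mem_range.mp hk))]

theorem sum_antidiagonal_inv_add_one_mul_inv_add_one (n : ℕ) :
    ∑ kl ∈ antidiagonal n, ((kl.1 + 1 : ℝ) * (kl.2 + 1))⁻¹ = 2 * harmonic (n + 1) / (n + 2) := by
  have hsplit : ∀ kl ∈ antidiagonal n, ((kl.1 + 1 : ℝ) * (kl.2 + 1))⁻¹
      = ((kl.1 + 1 : ℝ)⁻¹ + (kl.2 + 1 : ℝ)⁻¹) / (n + 2) := by
    intro kl hkl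
    have hn : (kl.1 + kl.2 : ℝ) = n := by exact_mod_cast mem_antidiagonal.mp hkl
    field_simp
    linarith
  have hfst : ∑ kl ∈ antidiagonal n, (kl.1 + 1 : ℝ)⁻¹ = harmonic (n + 1) := by
    rw [sum_antidiagonal_eq_sum_range_succ_mk]
    simp [harmonic]
  have hsnd : ∑ kl ∈ antidiagonal n, (kl.2 + 1 : ℝ)⁻¹ = harmonic (n + 1) :=
    (sum_antidiagonal_swap (f := fun kl : ℕ × ℕ => (kl.1 + 1 : ℝ)⁻¹)).trans hfst
  rw [sum_congr rfl hsplit, ← sum_div, sum_add_distrib, hfst, hsnd]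
  ring

theorem Real.hasSum_two_mul_harmonic_div_mul_pow {x : ℝ} (hx : |x| < 1) :
    HasSum (fun n : ℕ => 2 * harmonic n / (n + 1) * x ^ (n + 1)) (Real.log (1 - x) ^ 2) := by
  have hlog := Real.hasSum_pow_div_log_of_abs_lt_one hx
  have hnorm : Summable fun n : ℕ => ‖x ^ (n + 1) / (n + 1)‖ := by
    refine (Real.hasSum_pow_div_log_of_abs_lt_one (x := |x|) (by rwa [abs_abs])).summable.congr
      fun n => ?_
    rw [Real.norm_eq_abs, abs_div, abs_pow, abs_of_nonneg (by positivity : (0 : ℝ) ≤ n + 1)]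
  have hterm : ∀ n : ℕ, ∑ kl ∈ antidiagonal n,
      x ^ (kl.1 + 1) / (kl.1 + 1) * (x ^ (kl.2 + 1) / (kl.2 + 1))
      = 2 * harmonic (n + 1) / ((n + 1 : ℕ) + 1) * x ^ (n + 1 + 1) := by
    intro n
    rw [Nat.cast_succ, add_assoc (n : ℝ), one_add_one_eq_two,
      ← sum_antidiagonal_inv_add_one_mul_inv_add_one, sum_mul]
    refine sum_congr rfl fun kl hkl => ?_
    rw [div_mul_div_comm, ← pow_add, ← mem_antidiagonal.mp hkl, div_eq_inv_mul, mul_comm]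
    ring_nf
  have hprod := hlog.mul_antidiagonal_of_summable_norm hlog hnorm hnorm
  simp only [hterm, ← sq, neg_sq] at hprod
  refine (hasSum_nat_add_iff' 1).mp ?_
  simpa using hprod

theorem harmonic_succ_sq_sub_sq (n : ℕ) :
    (harmonic (n + 1) : ℝ) ^ 2 - (harmonic n : ℝ) ^ 2
      = 2 * harmonic n / (n + 1) + 1 / ((n : ℝ) + 1) ^ 2 := by
  rw [harmonic_succ]
  push_cast
  field_simp
  ring

theorem Real.summable_pow_succ_div_sq {x : ℝ} (hx : |x| ≤ 1) :
    Summable fun k : ℕ => x ^ (k + 1) / ((k : ℝ) + 1) ^ 2 := by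
  have hinv : Summable fun k : ℕ => 1 / ((k + 1 : ℕ) : ℝ) ^ 2 :=
    (summable_nat_add_iff 1).mpr (Real.summable_one_div_nat_pow.mpr one_lt_two)
  refine .of_norm_bounded (hinv.congr fun k => by push_cast; rfl) fun k => ?_
  rw [norm_div, norm_pow, Real.norm_eq_abs, norm_pow, Real.norm_eq_abs,
    abs_of_nonneg (by positivity : (0 : ℝ) ≤ k + 1)]
  gcongr
  exact pow_le_one₀ (abs_nonneg x) hx

theorem Real.hasSum_harmonic_succ_sq_sub_sq_mul_pow {x : ℝ} (hx : |x| < 1) :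
    HasSum (fun n : ℕ => ((harmonic (n + 1) : ℝ) ^ 2 - (harmonic n : ℝ) ^ 2) * x ^ (n + 1))
      (Real.log (1 - x) ^ 2 + ∑' k : ℕ, x ^ (k + 1) / ((k : ℝ) + 1) ^ 2) := by
  refine (Real.hasSum_two_mul_harmonic_div_mul_pow hx).add
    (Real.summable_pow_succ_div_sq hx.le).hasSum |>.congr_fun fun n => ?_
  rw [harmonic_succ_sq_sub_sq]
  ring

theorem stmt_13 (p : ℝ) (hp : p ∈ Set.Ioo (0 : ℝ) 1) :
    HasSum (fun n : ℕ =>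
        (∑ i ∈ Finset.Icc 1 (n + 1), (1 : ℝ) / i) ^ 2 * (1 - p) * p ^ n)
      ((1 / p) * ∑' k : ℕ, p ^ (k + 1) / ((k : ℝ) + 1) ^ 2 +
        (Real.log (1 - p)) ^ 2 / p) := by
  obtain ⟨hp0, hp1⟩ := hp
  have hpabs : |p| < 1 := abs_lt.mpr ⟨by linarith, hp1⟩
  have hinc : HasSum (fun n : ℕ => ((harmonic (n + 1) : ℝ) ^ 2 - (harmonic n : ℝ) ^ 2) * p ^ n)
      ((Real.log (1 - p) ^ 2 + ∑' k : ℕ, p ^ (k + 1) / ((k : ℝ) + 1) ^ 2) / p) :=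
    (Real.hasSum_harmonic_succ_sq_sub_sq_mul_pow hpabs).div_const p |>.congr_fun fun n => by
      rw [mul_div_assoc, pow_succ p n, mul_div_cancel_right₀ _ hp0.ne']
  have hsq := (hinc.sum_range_mul_geometric (by rwa [Real.norm_eq_abs])
    hinc.summable.norm).mul_right (1 - p)
  have hsum : 1 / p * ∑' k : ℕ, p ^ (k + 1) / ((k : ℝ) + 1) ^ 2 + Real.log (1 - p) ^ 2 / p
      = (Real.log (1 - p) ^ 2 + ∑' k : ℕ, p ^ (k + 1) / ((k : ℝ) + 1) ^ 2) / p
        * (1 - p)⁻¹ * (1 - p) := by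
    field_simp [(by linarith : 1 - p ≠ 0)]
    ring
  rw [hsum]
  refine hsq.congr_fun fun n => ?_
  rw [sum_range_sub (fun k => (harmonic k : ℝ) ^ 2), harmonic_zero, harmonic_eq_sum_Icc]
  push_cast [one_div]
  ring
end
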